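/- arXiv:1512.04403 — 2 statements merged into one kernel-verified Lean document; each statement's English description precedes it below -/
import Mathlib

section
/- Assume the project is PCL-indexable, i.e., conditions (PCLI1), (PCLI2) and (PCLI3) hold, and let p be an initial distribution on ℝ with ∫ w dp < ∞. Let ν_{F(p,·)} be the unique finite signed Borel measure on ℝ with ν_{F(p,·)}(z₁,z₂] = F(p,z₁) − F(p,z₂) for all finite z₁ ≤ z₂ (which exists since z ↦ F(p,z) is bounded, càdlàg and of bounded variation). Then ν_{F(p,·)} is absolutely continuous with respect to ν_{G(p,·)}, and m* is a Radon–Nikodým derivative of ν_{F(p,·)} with respect to ν_{G(p,·)}: ν_{F(p,·)}(S) = ∫_S m* dν_{G(p,·)} for every Borel set S ⊆ ℝ. -/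
open MeasureTheory ProbabilityTheory Filter Topology Set

noncomputable section

/-- A restless bandit project: the model data (discount factor `β`, passive/active
Markov transition kernels `κ false`/`κ true`, reward `r` and resource consumption `c`),
Assumption 1 (the weighted sup-norm conditions for weight `w` and constants `M`, `γ`),
together with the threshold-policy performance metrics `F`, `G` (for `z`-policies,
active iff `x > z`), `Fm`, `Gm` (for `z⁻`-policies, active iff `x ≥ z`), and the
optimal value function `V lam` of the `lam`-price problem, each of which is the
(unique) `w`-bounded measurable solution of its fixed-point equation. -/
structure Bandit where
  β : ℝ
  κ : Bool → Kernel ℝ ℝ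
  r : ℝ → Bool → ℝ
  c : ℝ → Bool → ℝ
  w : ℝ → ℝ
  M : ℝ
  γ : ℝ
  F : ℝ → EReal → ℝ
  G : ℝ → EReal → ℝ
  Fm : ℝ → EReal → ℝ
  Gm : ℝ → EReal → ℝ
  V : ℝ → ℝ → ℝ
  hβ0 : 0 ≤ β
  hβ1 : β < 1
  hκ : ∀ a, IsMarkovKernel (κ a)
  hr_cont : ∀ a, Continuous fun x => r x a
  hc_cont : ∀ a, Continuous fun x => c x a
  hc0 : ∀ x, 0 ≤ c x false
  hc01 : ∀ x, c x false < c x true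
  hw_meas : Measurable w
  hw_one : ∀ x, 1 ≤ w x
  hM : 0 < M
  hβγ : β ≤ γ
  hγ1 : γ < 1
  hr_bd : ∀ x a, |r x a| ≤ M * w x
  hc_bd : ∀ x a, c x a ≤ M * w x
  hw_int : ∀ a x, Integrable w (κ a x)
  hw_drift : ∀ a x, β * ∫ y, w y ∂(κ a x) ≤ γ * w x
  hF_meas : ∀ z, Measurable fun x => F x z
  hG_meas : ∀ z, Measurable fun x => G x z
  hFm_meas : ∀ z, Measurable fun x => Fm x z
  hGm_meas : ∀ z, Measurable fun x => Gm x z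
  hV_meas : ∀ lam, Measurable (V lam)
  hF_bdd : ∀ z, ∃ C, ∀ x, |F x z| ≤ C * w x
  hG_bdd : ∀ z, ∃ C, ∀ x, |G x z| ≤ C * w x
  hFm_bdd : ∀ z, ∃ C, ∀ x, |Fm x z| ≤ C * w x
  hGm_bdd : ∀ z, ∃ C, ∀ x, |Gm x z| ≤ C * w x
  hV_bdd : ∀ lam, ∃ C, ∀ x, |V lam x| ≤ C * w x
  hF_eq : ∀ x z, F x z =
    r x (decide (z < (x : EReal))) +
      β * ∫ y, F y z ∂(κ (decide (z < (x : EReal))) x)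
  hG_eq : ∀ x z, G x z =
    c x (decide (z < (x : EReal))) +
      β * ∫ y, G y z ∂(κ (decide (z < (x : EReal))) x)
  hFm_eq : ∀ x z, Fm x z =
    r x (decide (z ≤ (x : EReal))) +
      β * ∫ y, Fm y z ∂(κ (decide (z ≤ (x : EReal))) x)
  hGm_eq : ∀ x z, Gm x z =
    c x (decide (z ≤ (x : EReal))) +
      β * ∫ y, Gm y z ∂(κ (decide (z ≤ (x : EReal))) x)
  hV_eq : ∀ lam x, V lam x =
    max (r x false - lam * c x false + β * ∫ y, V lam y ∂(κ false x))
        (r x true - lam * c x true + β * ∫ y, V lam y ∂(κ true x))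

/-- `ν` is the Lebesgue–Stieltjes measure of the (bounded nonincreasing
right-continuous) function `h`: `ν(z₁,z₂] = h z₁ - h z₂`. -/
def IsLSMeasureOfAnti (h : ℝ → ℝ) (ν : Measure ℝ) : Prop :=
  ∀ z₁ z₂ : ℝ, z₁ ≤ z₂ → ν (Set.Ioc z₁ z₂) = ENNReal.ofReal (h z₁ - h z₂)

/-- `ν` is the Lebesgue–Stieltjes measure of the (bounded nondecreasing
right-continuous) function `h`: `ν(z₁,z₂] = h z₂ - h z₁`. -/
def IsLSMeasureOfMono (h : ℝ → ℝ) (ν : Measure ℝ) : Prop :=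
  ∀ z₁ z₂ : ℝ, z₁ ≤ z₂ → ν (Set.Ioc z₁ z₂) = ENNReal.ofReal (h z₂ - h z₁)

/-- The real interval `(z₁, z₂] ⊆ ℝ` with extended-real endpoints. -/
def iocR (z₁ z₂ : EReal) : Set ℝ := {y : ℝ | z₁ < (y : EReal) ∧ (y : EReal) ≤ z₂}

/-- `t`-step distribution of the Markov chain with kernel `κ` and initial law `p`. -/
def kerIter (κ : Kernel ℝ ℝ) : ℕ → Measure ℝ → Measure ℝ
  | 0, p => p
  | (t + 1), p => (kerIter κ t p).bind fun x => κ x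

namespace Bandit

variable (P : Bandit)

/-- Marginal reward metric `f(x,z)` of the `z`-policy. -/
def f (x : ℝ) (z : EReal) : ℝ :=
  (P.r x true - P.r x false) +
    P.β * ((∫ y, P.F y z ∂(P.κ true x)) - ∫ y, P.F y z ∂(P.κ false x))

/-- Marginal resource metric `g(x,z)` of the `z`-policy. -/
def g (x : ℝ) (z : EReal) : ℝ :=
  (P.c x true - P.c x false) +
    P.β * ((∫ y, P.G y z ∂(P.κ true x)) - ∫ y, P.G y z ∂(P.κ false x))

/-- Marginal reward metric `f(x,z⁻)` of the `z⁻`-policy. -/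
def fm (x : ℝ) (z : EReal) : ℝ :=
  (P.r x true - P.r x false) +
    P.β * ((∫ y, P.Fm y z ∂(P.κ true x)) - ∫ y, P.Fm y z ∂(P.κ false x))

/-- Marginal resource metric `g(x,z⁻)` of the `z⁻`-policy. -/
def gm (x : ℝ) (z : EReal) : ℝ :=
  (P.c x true - P.c x false) +
    P.β * ((∫ y, P.Gm y z ∂(P.κ true x)) - ∫ y, P.Gm y z ∂(P.κ false x))

/-- Marginal productivity metric `m(x,z) = f(x,z)/g(x,z)`. -/
def m (x : ℝ) (z : EReal) : ℝ := P.f x z / P.g x z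

/-- Marginal productivity metric `m(x,z⁻) = f(x,z⁻)/g(x,z⁻)`. -/
def mm (x : ℝ) (z : EReal) : ℝ := P.fm x z / P.gm x z

/-- The marginal productivity (MP) index `m*(x) = m(x,x)`. -/
def mStar (x : ℝ) : ℝ := P.m x (x : EReal)

/-- The active action is `P_lam`-optimal at `x`. -/
def ActOpt (lam x : ℝ) : Prop :=
  P.r x false - lam * P.c x false + P.β * ∫ y, P.V lam y ∂(P.κ false x) ≤
    P.r x true - lam * P.c x true + P.β * ∫ y, P.V lam y ∂(P.κ true x)

/-- The passive action is `P_lam`-optimal at `x`. -/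
def PassOpt (lam x : ℝ) : Prop :=
  P.r x true - lam * P.c x true + P.β * ∫ y, P.V lam y ∂(P.κ true x) ≤
    P.r x false - lam * P.c x false + P.β * ∫ y, P.V lam y ∂(P.κ false x)

/-- The project is indexable with index `ν`. -/
def Indexable (ν : ℝ → ℝ) : Prop :=
  ∀ lam x, (P.ActOpt lam x ↔ lam ≤ ν x) ∧ (P.PassOpt lam x ↔ ν x ≤ lam)

/-- The `z`-policy is `P_lam`-optimal. -/
def ZPolicyOpt (z : EReal) (lam : ℝ) : Prop :=
  ∀ x, P.F x z - lam * P.G x z = P.V lam x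

/-- The `z⁻`-policy is `P_lam`-optimal. -/
def ZmPolicyOpt (z : EReal) (lam : ℝ) : Prop :=
  ∀ x, P.Fm x z - lam * P.Gm x z = P.V lam x

/-- The project is strongly threshold-indexable with index `ν`. -/
def StronglyThresholdIndexable (ν : ℝ → ℝ) : Prop :=
  P.Indexable ν ∧
    ∀ lam : ℝ, ∃ z : EReal, P.ZPolicyOpt z lam ∧ P.ZmPolicyOpt z lam

/-- PCL-indexability condition (PCLI1). -/
def PCLI1 : Prop := ∀ (x : ℝ) (z : EReal), 0 < P.g x z

/-- PCL-indexability condition (PCLI2). -/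
def PCLI2 : Prop :=
  Monotone P.mStar ∧ Continuous P.mStar ∧ BddBelow (Set.range P.mStar)

/-- PCL-indexability condition (PCLI3). -/
def PCLI3 : Prop :=
  ∀ x : ℝ, ∀ ν : Measure ℝ, IsLSMeasureOfAnti (fun z : ℝ => P.G x z) ν →
    ∀ z₁ z₂ : ℝ, z₁ < z₂ →
      P.F x z₂ - P.F x z₁ = -∫ z in Set.Ioc z₁ z₂, P.mStar z ∂ν

/-- The project is PCL-indexable. -/
def PCLIndexable : Prop := P.PCLI1 ∧ P.PCLI2 ∧ P.PCLI3

/-- Reward metric with initial distribution `p`. -/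
def Fp (p : Measure ℝ) (z : EReal) : ℝ := ∫ x, P.F x z ∂p

/-- Resource metric with initial distribution `p`. -/
def Gp (p : Measure ℝ) (z : EReal) : ℝ := ∫ x, P.G x z ∂p

/-- `z⁻`-policy reward metric with initial distribution `p`. -/
def Fmp (p : Measure ℝ) (z : EReal) : ℝ := ∫ x, P.Fm x z ∂p

/-- `z⁻`-policy resource metric with initial distribution `p`. -/
def Gmp (p : Measure ℝ) (z : EReal) : ℝ := ∫ x, P.Gm x z ∂p

/-- An admissible initial distribution: a probability measure with `∫ w dp < ∞`. -/
def IsInitDist (p : Measure ℝ) : Prop :=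
  IsProbabilityMeasure p ∧ Integrable P.w p

/-- The transition kernel of the `z`-policy (active iff `x > z`). -/
def thrKer (z : EReal) : Kernel ℝ ℝ :=
  haveI : DecidablePred (· ∈ {x : ℝ | z < (x : EReal)}) := Classical.decPred _
  Kernel.piecewise
    (show MeasurableSet {x : ℝ | z < (x : EReal)} from
      measurable_coe_real_ereal measurableSet_Ioi)
    (P.κ true) (P.κ false)

/-- The transition kernel of the `z⁻`-policy (active iff `x ≥ z`). -/
def thrKerM (z : EReal) : Kernel ℝ ℝ :=
  haveI : DecidablePred (· ∈ {x : ℝ | z ≤ (x : EReal)}) := Classical.decPred _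
  Kernel.piecewise
    (show MeasurableSet {x : ℝ | z ≤ (x : EReal)} from
      measurable_coe_real_ereal measurableSet_Ici)
    (P.κ true) (P.κ false)

/-- The (discounted) state occupation measure `μ_p^z` of the `z`-policy. -/
def occ (z : EReal) (p : Measure ℝ) : Measure ℝ :=
  Measure.sum fun t : ℕ => ENNReal.ofReal (P.β ^ t) • kerIter (P.thrKer z) t p

/-- The (discounted) state occupation measure `μ_p^{z⁻}` of the `z⁻`-policy. -/
def occM (z : EReal) (p : Measure ℝ) : Measure ℝ :=
  Measure.sum fun t : ℕ => ENNReal.ofReal (P.β ^ t) • kerIter (P.thrKerM z) t p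

end Bandit

/-- Finite-horizon reward metric `F_k(x,z)` (value iteration). -/
def Bandit.Fk (P : Bandit) : ℕ → ℝ → EReal → ℝ
  | 0, x, z => P.r x (decide (z < (x : EReal)))
  | (k + 1), x, z =>
      P.r x (decide (z < (x : EReal))) +
        P.β * ∫ y, Bandit.Fk P k y z ∂(P.κ (decide (z < (x : EReal))) x)

/-- Finite-horizon resource metric `G_k(x,z)` (value iteration). -/
def Bandit.Gk (P : Bandit) : ℕ → ℝ → EReal → ℝ
  | 0, x, z => P.c x (decide (z < (x : EReal)))
  | (k + 1), x, z =>
      P.c x (decide (z < (x : EReal))) +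
        P.β * ∫ y, Bandit.Gk P k y z ∂(P.κ (decide (z < (x : EReal))) x)

/-- Finite-horizon marginal reward metric `f_k(x,z)`. -/
def Bandit.fk (P : Bandit) : ℕ → ℝ → EReal → ℝ
  | 0, x, _ => P.r x true - P.r x false
  | (k + 1), x, z =>
      (P.r x true - P.r x false) +
        P.β * ((∫ y, P.Fk k y z ∂(P.κ true x)) - ∫ y, P.Fk k y z ∂(P.κ false x))

/-- Finite-horizon marginal resource metric `g_k(x,z)`. -/
def Bandit.gk (P : Bandit) : ℕ → ℝ → EReal → ℝ
  | 0, x, _ => P.c x true - P.c x false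
  | (k + 1), x, z =>
      (P.c x true - P.c x false) +
        P.β * ((∫ y, P.Gk k y z ∂(P.κ true x)) - ∫ y, P.Gk k y z ∂(P.κ false x))

namespace Bandit

variable (P : Bandit)

/-- Finite-horizon MP metric `m_k(x,z)`. -/
def mk' (k : ℕ) (x : ℝ) (z : EReal) : ℝ := P.fk k x z / P.gk k x z

/-- Finite-horizon MP index `m*_k(x)`. -/
def mkStar (k : ℕ) (x : ℝ) : ℝ := P.mk' k x (x : EReal)

/-- `g̲(x,z) = inf_k g_k(x,z)`. -/
def gbar (x : ℝ) (z : EReal) : ℝ := ⨅ k : ℕ, P.gk k x z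

end Bandit

/-!
For `z₁ ≤ z₂`, both `G(·,z₁)` and `G(·,z₂)` solve policy-evaluation equations for the
`z₁`-policy, with one-step costs differing by `g(x,z₂)` for `x ∈ (z₁,z₂]` and not at all
elsewhere. By (PCLI1) and a comparison principle coming from the drift condition,
`z ↦ G(x,z)` is nonincreasing; passing to the limit in its equation shows
it is right-continuous. It therefore has a Lebesgue–Stieltjes measure `ν_x`, (PCLI3) applies to
it, and `ν_{G(p,·)} = ∫ ν_x dp(x)`. Integrating (PCLI3) in `x` gives
`ν_{F(p,·)}(z₁,z₂] = ∫_{(z₁,z₂]} m* dν_{G(p,·)}`. Since `m*` is bounded below and the signed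
measure `ν_{F(p,·)}` is bounded, `m*` is `ν_{G(p,·)}`-integrable; finally, two finite signed
measures on `ℝ` that agree on all intervals `(z₁,z₂]` coincide.
-/

namespace MeasureTheory

theorem measure_univ_eq_iSup_Ioc (μ : Measure ℝ) : μ univ = ⨆ n : ℕ, μ (Ioc (-(n : ℝ)) n) := by
  have hcover : (⋃ n : ℕ, Ioc (-(n : ℝ)) n) = univ := by
    refine eq_univ_of_forall fun x => mem_iUnion.2 ?_
    obtain ⟨n, hn⟩ := exists_nat_ge (|x| + 1)
    exact ⟨n, by linarith [neg_abs_le x], by linarith [le_abs_self x]⟩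
  have hmono : Monotone fun n : ℕ => Ioc (-(n : ℝ)) n := fun m n hmn =>
    Ioc_subset_Ioc (neg_le_neg (Nat.cast_le.2 hmn)) (Nat.cast_le.2 hmn)
  rw [← hcover, hmono.measure_iUnion]

theorem SignedMeasure.ext_of_Ioc {s t : SignedMeasure ℝ}
    (h : ∀ a b : ℝ, a < b → s (Ioc a b) = t (Ioc a b)) : s = t := by
  set sj := s.toJordanDecomposition
  set tj := t.toJordanDecomposition
  have key : sj.posPart + tj.negPart = tj.posPart + sj.negPart := by
    refine Measure.ext_of_Ioc _ _ fun a b hab => ?_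
    have hst := h a b hab
    rw [s.apply_eq_posPart_real_sub_negPart_real measurableSet_Ioc,
      t.apply_eq_posPart_real_sub_negPart_real measurableSet_Ioc] at hst
    rw [← ENNReal.toReal_eq_toReal_iff' (measure_ne_top _ _) (measure_ne_top _ _)]
    simp only [← measureReal_def]
    rw [measureReal_add_apply, measureReal_add_apply]
    linarith
  ext S hS
  have hS' := congrArg (fun μ : Measure ℝ => μ.real S) key
  rw [measureReal_add_apply, measureReal_add_apply] at hS'
  rw [s.apply_eq_posPart_real_sub_negPart_real hS, t.apply_eq_posPart_real_sub_negPart_real hS]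
  linarith

theorem integral_bind_of_nonneg {α β : Type*} [MeasurableSpace α] [MeasurableSpace β]
    {p : Measure α} {μ : α → Measure β} (hμ : Measurable μ) {f : β → ℝ} (hf : Measurable f)
    (hf₀ : 0 ≤ f) (hfμ : ∀ x, Integrable f (μ x))
    (hφ : Integrable (fun x => ∫ y, f y ∂μ x) p) :
    ∫ y, f y ∂p.bind μ = ∫ x, ∫ y, f y ∂μ x ∂p := by
  rw [integral_eq_lintegral_of_nonneg_ae (.of_forall hf₀) hf.aestronglyMeasurable,
    Measure.lintegral_bind hμ.aemeasurable hf.ennreal_ofReal.aemeasurable,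
    integral_eq_lintegral_of_nonneg_ae (.of_forall fun x => integral_nonneg hf₀)
      hφ.aestronglyMeasurable]
  congr 1
  exact lintegral_congr fun x =>
    (ofReal_integral_eq_lintegral_ofReal (hfμ x) (.of_forall hf₀)).symm

theorem integrable_of_setIntegral_Ioc_le {μ : Measure ℝ} [IsFiniteMeasure μ] {f : ℝ → ℝ}
    (hf : Continuous f) {b : ℝ} (hb : ∀ z, b ≤ f z) {C : ℝ}
    (hC : ∀ z₁ z₂, z₁ < z₂ → ∫ z in Ioc z₁ z₂, f z ∂μ ≤ C) : Integrable f μ := by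
  have hcover : AECover μ atTop fun n : ℕ => Ioc (-(n : ℝ) - 1) (n + 1) :=
    aecover_Ioc
      (tendsto_atBot_add_const_right _ _
        (tendsto_neg_atTop_atBot.comp tendsto_natCast_atTop_atTop))
      (tendsto_atTop_add_const_right _ _ tendsto_natCast_atTop_atTop)
  have hshift : Integrable (fun z => f z - b) μ := by
    refine hcover.integrable_of_integral_bounded_of_nonneg_ae (C + |b| * μ.real univ)
      (fun n => (hf.sub continuous_const).integrableOn_Ioc)
      (.of_forall fun z => sub_nonneg.2 (hb z)) (.of_forall fun n => ?_)
    set I := Ioc (-(n : ℝ) - 1) (n + 1)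
    rw [integral_sub hf.integrableOn_Ioc (integrable_const b), setIntegral_const, smul_eq_mul]
    have hlt : -(n : ℝ) - 1 < n + 1 := by linarith [n.cast_nonneg (α := ℝ)]
    have hI : μ.real I ≤ μ.real univ := measureReal_mono (subset_univ _)
    nlinarith [hC _ _ hlt, neg_abs_le b, measureReal_nonneg (μ := μ) (s := I), abs_nonneg b]
  exact (hshift.add (integrable_const b)).congr (.of_forall fun z => sub_add_cancel (f z) b)

end MeasureTheory

theorem IsLSMeasureOfAnti.isFiniteMeasure {h : ℝ → ℝ} {ν : Measure ℝ}
    (hν : IsLSMeasureOfAnti h ν) {lo hi : ℝ} (hlo : ∀ z, lo ≤ h z) (hhi : ∀ z, h z ≤ hi) :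
    IsFiniteMeasure ν := by
  refine ⟨(measure_univ_eq_iSup_Ioc ν).trans_lt ?_⟩
  refine (iSup_le fun n => ?_).trans_lt (ENNReal.ofReal_lt_top (r := hi - lo))
  rw [hν _ _ (by linarith [n.cast_nonneg (α := ℝ)])]
  exact ENNReal.ofReal_le_ofReal (by linarith [hlo n, hhi (-(n : ℝ))])

namespace Bandit

variable {P : Bandit}

variable (P) in
def IsWBounded (v : ℝ → ℝ) : Prop := ∃ C, ∀ x, |v x| ≤ C * P.w x

theorem w_pos (x : ℝ) : 0 < P.w x := one_pos.trans_le (P.hw_one x)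

theorem IsWBounded.sub {u v : ℝ → ℝ} (hu : P.IsWBounded u) (hv : P.IsWBounded v) :
    P.IsWBounded fun x => u x - v x := by
  obtain ⟨Cu, hCu⟩ := hu
  obtain ⟨Cv, hCv⟩ := hv
  exact ⟨Cu + Cv, fun x => (abs_sub _ _).trans (by linarith [hCu x, hCv x])⟩

theorem IsWBounded.integrable {v : ℝ → ℝ} (hv : P.IsWBounded v) (hmeas : Measurable v)
    {μ : Measure ℝ} (hw : Integrable P.w μ) : Integrable v μ := by
  obtain ⟨C, hC⟩ := hv
  exact (hw.const_mul C).mono' hmeas.aestronglyMeasurable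
    (.of_forall fun x => (Real.norm_eq_abs _).trans_le (hC x))

/-- Iterating the equation together with the drift condition gives `v ≥ -C γⁿ w` for every `n`. -/
theorem nonneg_of_eq_add_integral (σ : ℝ → Bool) {v h : ℝ → ℝ} (hv : Measurable v)
    (hvw : P.IsWBounded v) (hh : ∀ x, 0 ≤ h x)
    (hfix : ∀ x, v x = h x + P.β * ∫ y, v y ∂P.κ (σ x) x) (x : ℝ) : 0 ≤ v x := by
  have hvint : ∀ a x, Integrable v (P.κ a x) := fun a x => hvw.integrable hv (P.hw_int a x)
  obtain ⟨C, hC⟩ := hvw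
  have hγ : 0 ≤ P.γ := P.hβ0.trans P.hβγ
  have hC₀ : 0 ≤ C := nonneg_of_mul_nonneg_left ((abs_nonneg _).trans (hC 0)) (w_pos 0)
  have hlower : ∀ n : ℕ, ∀ x, -(C * P.γ ^ n * P.w x) ≤ v x := by
    intro n
    induction n with
    | zero => simpa using fun x => neg_le_of_abs_le (hC x)
    | succ n ih =>
      intro x
      have hint : ∫ y, -(C * P.γ ^ n) * P.w y ∂P.κ (σ x) x ≤ ∫ y, v y ∂P.κ (σ x) x :=
        integral_mono ((P.hw_int _ x).const_mul _) (hvint _ x) fun y => by linarith [ih y]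
      rw [integral_const_mul] at hint
      calc -(C * P.γ ^ (n + 1) * P.w x) = -(C * P.γ ^ n) * (P.γ * P.w x) := by ring
        _ ≤ -(C * P.γ ^ n) * (P.β * ∫ y, P.w y ∂P.κ (σ x) x) :=
          mul_le_mul_of_nonpos_left (P.hw_drift _ x)
            (neg_nonpos.2 (mul_nonneg hC₀ (pow_nonneg hγ n)))
        _ = P.β * (-(C * P.γ ^ n) * ∫ y, P.w y ∂P.κ (σ x) x) := by ring
        _ ≤ P.β * ∫ y, v y ∂P.κ (σ x) x := mul_le_mul_of_nonneg_left hint P.hβ0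
        _ ≤ v x := by linarith [hfix x, hh x]
  have hlim : Tendsto (fun n : ℕ => -(C * P.γ ^ n * P.w x)) atTop (𝓝 0) := by
    simpa using (((tendsto_pow_atTop_nhds_zero_of_lt_one hγ P.hγ1).const_mul C).mul_const
      (P.w x)).neg
  exact le_of_tendsto' hlim fun n => hlower n x

theorem le_of_eq_add_integral (σ : ℝ → Bool) {u v h₁ h₂ : ℝ → ℝ}
    (hu : Measurable u) (huw : P.IsWBounded u) (hv : Measurable v) (hvw : P.IsWBounded v)
    (hh : ∀ x, h₁ x ≤ h₂ x) (hufix : ∀ x, u x = h₁ x + P.β * ∫ y, u y ∂P.κ (σ x) x)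
    (hvfix : ∀ x, v x = h₂ x + P.β * ∫ y, v y ∂P.κ (σ x) x) : u ≤ v := by
  intro x
  refine sub_nonneg.1 (nonneg_of_eq_add_integral σ (v := fun x => v x - u x)
    (h := fun x => h₂ x - h₁ x) (hv.sub hu) (hvw.sub huw)
    (fun x => sub_nonneg.2 (hh x)) (fun x => ?_) x)
  rw [integral_sub (hvw.integrable hv (P.hw_int _ x)) (huw.integrable hu (P.hw_int _ x)),
    hufix x, hvfix x]
  ring

theorem integrable_G {μ : Measure ℝ} (hw : Integrable P.w μ) (z : EReal) :
    Integrable (fun x => P.G x z) μ :=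
  IsWBounded.integrable (P.hG_bdd z) (P.hG_meas z) hw

theorem integrable_F {μ : Measure ℝ} (hw : Integrable P.w μ) (z : EReal) :
    Integrable (fun x => P.F x z) μ :=
  IsWBounded.integrable (P.hF_bdd z) (P.hF_meas z) hw

theorem G_antitone (hg : P.PCLI1) (x : ℝ) : Antitone fun z : EReal => P.G x z := by
  intro z₁ z₂ hz
  set σ : ℝ → Bool := fun x => decide (z₁ < (x : EReal))
  have hcost : ∀ x, P.G x z₂ - P.β * ∫ y, P.G y z₂ ∂P.κ (σ x) x ≤ P.c x (σ x) := by
    intro x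
    have hgx := hg x z₂
    rw [Bandit.g] at hgx
    rw [P.hG_eq x z₂]
    by_cases h₂ : z₂ < (x : EReal)
    · simp [σ, h₂, hz.trans_lt h₂]
    by_cases h₁ : z₁ < (x : EReal)
    · simp only [σ, h₁, h₂, decide_true, decide_false]
      linarith
    · simp [σ, h₁, h₂]
  exact le_of_eq_add_integral σ (P.hG_meas z₂) (P.hG_bdd z₂) (P.hG_meas z₁) (P.hG_bdd z₁) hcost
    (fun x => by ring) (P.hG_eq · z₁) x

theorem G_antitone_real (hg : P.PCLI1) (x : ℝ) : Antitone fun z : ℝ => P.G x z :=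
  (G_antitone hg x).comp_monotone EReal.coe_strictMono.monotone

theorem abs_G_le (hg : P.PCLI1) (x : ℝ) {z₁ z z₂ : EReal} (h₁ : z₁ ≤ z) (h₂ : z ≤ z₂) :
    |P.G x z| ≤ |P.G x z₁| + |P.G x z₂| := by
  have := G_antitone hg x h₁
  have := G_antitone hg x h₂
  rw [abs_le]
  constructor <;> linarith [abs_nonneg (P.G x z₁), abs_nonneg (P.G x z₂), le_abs_self (P.G x z₁),
    neg_abs_le (P.G x z₂)]

variable (P) in
def rightLimG (z₀ y : ℝ) : ℝ := Function.rightLim (fun z : ℝ => P.G y z) z₀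

theorem tendsto_rightLimG (hg : P.PCLI1) (z₀ y : ℝ) :
    Tendsto (fun z : ℝ => P.G y z) (𝓝[>] z₀) (𝓝 (P.rightLimG z₀ y)) :=
  (G_antitone_real hg y).tendsto_rightLim z₀

theorem measurable_rightLimG (hg : P.PCLI1) (z₀ : ℝ) : Measurable (P.rightLimG z₀) :=
  measurable_of_tendsto_metrizable' (𝓝[>] z₀) (fun z : ℝ => P.hG_meas z)
    (tendsto_pi_nhds.2 (tendsto_rightLimG hg z₀))

theorem abs_rightLimG_le (hg : P.PCLI1) (z₀ y : ℝ) :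
    |P.rightLimG z₀ y| ≤ |P.G y z₀| + |P.G y ((z₀ + 1 : ℝ) : EReal)| := by
  refine le_of_tendsto (tendsto_rightLimG hg z₀ y).abs ?_
  filter_upwards [Ioc_mem_nhdsGT (lt_add_one z₀)] with z hz
  exact abs_G_le hg y (EReal.coe_le_coe_iff.2 hz.1.le) (EReal.coe_le_coe_iff.2 hz.2)

theorem isWBounded_rightLimG (hg : P.PCLI1) (z₀ : ℝ) : P.IsWBounded (P.rightLimG z₀) := by
  obtain ⟨C₀, hC₀⟩ := P.hG_bdd z₀
  obtain ⟨C₁, hC₁⟩ := P.hG_bdd ((z₀ + 1 : ℝ) : EReal)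
  exact ⟨C₀ + C₁, fun y => by linarith [abs_rightLimG_le hg z₀ y, hC₀ y, hC₁ y]⟩

/-- Passing to the limit `z ↓ z₀` in the equation of `G(·,z)`: eventually the `z`-policy acts
like the `z₀`-policy at `y`, and the integrals converge by dominated convergence. -/
theorem rightLimG_eq_add_integral (hg : P.PCLI1) (z₀ y : ℝ) :
    P.rightLimG z₀ y = P.c y (decide ((z₀ : EReal) < y)) +
      P.β * ∫ u, P.rightLimG z₀ u ∂P.κ (decide ((z₀ : EReal) < y)) y := by
  set a := decide ((z₀ : EReal) < y)
  have hpolicy : ∀ᶠ z : ℝ in 𝓝[>] z₀, decide ((z : EReal) < y) = a := by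
    by_cases hy : z₀ < y
    · filter_upwards [Ioo_mem_nhdsGT hy] with z hz
      simp [a, hy, hz.2]
    · filter_upwards [self_mem_nhdsWithin] with z hz
      simp [a, hy, not_lt.2 ((not_lt.1 hy).trans hz.le)]
  have hint : Tendsto (fun z : ℝ => ∫ u, P.G u z ∂P.κ a y) (𝓝[>] z₀)
      (𝓝 (∫ u, P.rightLimG z₀ u ∂P.κ a y)) := by
    refine tendsto_integral_filter_of_dominated_convergence
      (fun u => |P.G u z₀| + |P.G u ((z₀ + 1 : ℝ) : EReal)|)
      (.of_forall fun z => (P.hG_meas z).aestronglyMeasurable) ?_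
      (((integrable_G (P.hw_int a y) _).abs).add (integrable_G (P.hw_int a y) _).abs)
      (.of_forall (tendsto_rightLimG hg z₀))
    filter_upwards [Ioc_mem_nhdsGT (lt_add_one z₀)] with z hz
    exact .of_forall fun u => abs_G_le hg u (EReal.coe_le_coe_iff.2 hz.1.le)
      (EReal.coe_le_coe_iff.2 hz.2)
  refine tendsto_nhds_unique (tendsto_rightLimG hg z₀ y) ((hint.const_mul P.β).const_add _
    |>.congr' ?_)
  filter_upwards [hpolicy] with z hz
  rw [P.hG_eq y z, hz]

theorem rightLimG_eq (hg : P.PCLI1) (z₀ : ℝ) : P.rightLimG z₀ = fun y => P.G y z₀ := by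
  have hfix := rightLimG_eq_add_integral hg z₀
  have hGfix : ∀ y, P.G y z₀ = P.c y (decide ((z₀ : EReal) < y)) +
      P.β * ∫ u, P.G u z₀ ∂P.κ (decide ((z₀ : EReal) < y)) y := (P.hG_eq · z₀)
  exact le_antisymm
    (le_of_eq_add_integral _ (measurable_rightLimG hg z₀) (isWBounded_rightLimG hg z₀)
      (P.hG_meas z₀) (P.hG_bdd z₀) (fun _ => le_rfl) hfix hGfix)
    (le_of_eq_add_integral _ (P.hG_meas z₀) (P.hG_bdd z₀) (measurable_rightLimG hg z₀)
      (isWBounded_rightLimG hg z₀) (fun _ => le_rfl) hGfix hfix)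

theorem continuousWithinAt_G (hg : P.PCLI1) (x z₀ : ℝ) :
    ContinuousWithinAt (fun z : ℝ => P.G x z) (Ici z₀) z₀ := by
  rw [← continuousWithinAt_Ioi_iff_Ici,
    (G_antitone_real hg x).continuousWithinAt_Ioi_iff_rightLim_eq]
  exact congrFun (rightLimG_eq hg z₀) x

def stieltjesG (hg : P.PCLI1) (x : ℝ) : StieltjesFunction ℝ where
  toFun z := -P.G x z
  mono' := (G_antitone_real hg x).neg
  right_continuous' z := (continuousWithinAt_G hg x z).neg

theorem stieltjesG_measure_Ioc (hg : P.PCLI1) (x a b : ℝ) :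
    (stieltjesG hg x).measure (Ioc a b) = ENNReal.ofReal (P.G x a - P.G x b) := by
  rw [StieltjesFunction.measure_Ioc]
  exact congrArg ENNReal.ofReal (neg_sub_neg _ _)

theorem isLSMeasureOfAnti_stieltjesG (hg : P.PCLI1) (x : ℝ) :
    IsLSMeasureOfAnti (fun z : ℝ => P.G x z) (stieltjesG hg x).measure :=
  fun a b _ => stieltjesG_measure_Ioc hg x a b

instance (hg : P.PCLI1) (x : ℝ) : IsFiniteMeasure (stieltjesG hg x).measure :=
  StieltjesFunction.isFiniteMeasure_of_forall_abs_le (C := |P.G x ⊥| + |P.G x ⊤|) _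
    fun z => (abs_neg (P.G x z)).trans_le (abs_G_le hg x bot_le le_top)

theorem measurable_stieltjesG_measure (hg : P.PCLI1) :
    Measurable fun x => (stieltjesG hg x).measure := by
  have hIoc : ∀ a b : ℝ, Measurable fun x => (stieltjesG hg x).measure (Ioc a b) := by
    simp_rw [stieltjesG_measure_Ioc]
    exact fun a b => ((P.hG_meas a).sub (P.hG_meas b)).ennreal_ofReal
  refine .measure_of_isPiSystem (BorelSpace.measurable_eq.trans (borel_eq_generateFrom_Ioc ℝ))
    (isPiSystem_Ioc (id : ℝ → ℝ) id) ?_ ?_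
  · rintro _ ⟨a, b, -, rfl⟩
    exact hIoc a b
  · simp_rw [measure_univ_eq_iSup_Ioc]
    exact .iSup fun n => hIoc _ _

theorem Gp_antitone (hg : P.PCLI1) {p : Measure ℝ} (hp : P.IsInitDist p) : Antitone (P.Gp p) :=
  fun _ _ hz => integral_mono (integrable_G hp.2 _) (integrable_G hp.2 _)
    fun x => G_antitone hg x hz

theorem bind_stieltjesG_measure (hg : P.PCLI1) {p : Measure ℝ} (hp : P.IsInitDist p)
    {νG : Measure ℝ} [IsFiniteMeasure νG] (hνG : IsLSMeasureOfAnti (fun z : ℝ => P.Gp p z) νG) :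
    p.bind (fun x => (stieltjesG hg x).measure) = νG := by
  refine (Measure.ext_of_Ioc νG _ fun a b hab => ?_).symm
  rw [hνG a b hab.le, Measure.bind_apply measurableSet_Ioc
    (measurable_stieltjesG_measure hg).aemeasurable]
  simp_rw [stieltjesG_measure_Ioc]
  have hint : Integrable (fun x => P.G x a - P.G x b) p :=
    (integrable_G hp.2 _).sub (integrable_G hp.2 _)
  rw [← ofReal_integral_eq_lintegral_ofReal hint
      (.of_forall fun x => sub_nonneg.2 (G_antitone_real hg x hab.le)),
    integral_sub (integrable_G hp.2 _) (integrable_G hp.2 _)]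
  rfl

/-- Shifted by a lower bound, `m*` is nonnegative, so its integral against the mixture
`ν_{G(p,·)} = ∫ ν_x dp(x)` is the `p`-average of the `ν_x`-integrals given by (PCLI3). -/
theorem setIntegral_mStar_Ioc (hPCL : P.PCLIndexable) {p : Measure ℝ} (hp : P.IsInitDist p)
    {νG : Measure ℝ} [IsFiniteMeasure νG] (hνG : IsLSMeasureOfAnti (fun z : ℝ => P.Gp p z) νG)
    {z₁ z₂ : ℝ} (hz : z₁ < z₂) :
    ∫ z in Ioc z₁ z₂, P.mStar z ∂νG = P.Fp p z₁ - P.Fp p z₂ := by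
  obtain ⟨hg, ⟨-, hcont, b, hb⟩, hPCLI3⟩ := hPCL
  set f := (Ioc z₁ z₂).indicator fun z => P.mStar z - b
  have hf₀ : 0 ≤ f := indicator_nonneg fun z _ => sub_nonneg.2 (hb ⟨z, rfl⟩)
  have hfint : ∀ μ : Measure ℝ, [IsFiniteMeasure μ] → ∫ z, f z ∂μ =
      ∫ z in Ioc z₁ z₂, P.mStar z ∂μ - b * μ.real (Ioc z₁ z₂) := fun μ _ => by
    rw [integral_indicator measurableSet_Ioc, integral_sub hcont.integrableOn_Ioc
      (integrable_const b), setIntegral_const, smul_eq_mul, mul_comm]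
  have hfν : ∀ x, ∫ z, f z ∂(stieltjesG hg x).measure =
      (P.F x z₁ - P.F x z₂) - b * (P.G x z₁ - P.G x z₂) := by
    intro x
    rw [hfint, measureReal_def, stieltjesG_measure_Ioc,
      ENNReal.toReal_ofReal (sub_nonneg.2 (G_antitone_real hg x hz.le))]
    linarith [hPCLI3 x _ (isLSMeasureOfAnti_stieltjesG hg x) z₁ z₂ hz]
  have hFint : Integrable (fun x => P.F x z₁ - P.F x z₂) p :=
    (integrable_F hp.2 _).sub (integrable_F hp.2 _)
  have hGint : Integrable (fun x => P.G x z₁ - P.G x z₂) p :=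
    (integrable_G hp.2 _).sub (integrable_G hp.2 _)
  have hφ : Integrable (fun x => ∫ z, f z ∂(stieltjesG hg x).measure) p := by
    simp_rw [hfν]
    exact hFint.sub (hGint.const_mul b)
  have hbind := integral_bind_of_nonneg (f := f) (measurable_stieltjesG_measure hg)
    ((hcont.measurable.sub measurable_const).indicator measurableSet_Ioc) hf₀
    (fun x => (hcont.sub continuous_const).integrableOn_Ioc.integrable_indicator measurableSet_Ioc)
    hφ
  rw [bind_stieltjesG_measure hg hp hνG, hfint, measureReal_def, hνG z₁ z₂ hz.le,
    ENNReal.toReal_ofReal (sub_nonneg.2 (Gp_antitone hg hp (EReal.coe_le_coe_iff.2 hz.le)))]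
    at hbind
  simp_rw [hfν] at hbind
  rw [integral_sub hFint (hGint.const_mul b), integral_const_mul,
    integral_sub (integrable_F hp.2 _) (integrable_F hp.2 _),
    integral_sub (integrable_G hp.2 _) (integrable_G hp.2 _)] at hbind
  unfold Fp
  unfold Gp at hbind
  linarith

end Bandit

/-- Under PCL-indexability, the Lebesgue–Stieltjes signed measure of `F(p,·)`
is absolutely continuous with respect to that of `G(p,·)`, with the MP index
`m*` as a Radon–Nikodým derivative. -/
theorem mpIndex_radonNikodym (P : Bandit) (h : P.PCLIndexable)
    (p : Measure ℝ) (hp : P.IsInitDist p)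
    (νG : Measure ℝ) (hνG : IsLSMeasureOfAnti (fun z : ℝ => P.Gp p z) νG)
    (νF : MeasureTheory.SignedMeasure ℝ)
    (hνF : ∀ z₁ z₂ : ℝ, z₁ ≤ z₂ →
      νF (Set.Ioc z₁ z₂) = P.Fp p z₁ - P.Fp p z₂) :
    (∀ S : Set ℝ, MeasurableSet S → νG S = 0 → νF S = 0) ∧
    (∀ S : Set ℝ, MeasurableSet S → νF S = ∫ z in S, P.mStar z ∂νG) := by
  obtain ⟨hg, ⟨-, hcont, b, hb⟩, -⟩ := id h
  have : IsFiniteMeasure νG :=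
    hνG.isFiniteMeasure (fun _ => Bandit.Gp_antitone hg hp le_top)
      (fun _ => Bandit.Gp_antitone hg hp bot_le)
  have hIoc : ∀ z₁ z₂ : ℝ, z₁ < z₂ → ∫ z in Ioc z₁ z₂, P.mStar z ∂νG = νF (Ioc z₁ z₂) :=
    fun z₁ z₂ hz => (Bandit.setIntegral_mStar_Ioc h hp hνG hz).trans (hνF z₁ z₂ hz.le).symm
  have hint : Integrable P.mStar νG :=
    integrable_of_setIntegral_Ioc_le hcont (fun z => hb ⟨z, rfl⟩) fun z₁ z₂ hz =>
      (hIoc z₁ z₂ hz).trans_le <| (le_abs_self _).trans <|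
        (νF.norm_le_totalVariation _).trans (measureReal_mono (subset_univ _))
  have hνF_eq : νF = νG.withDensityᵥ P.mStar := SignedMeasure.ext_of_Ioc fun z₁ z₂ hz => by
    rw [withDensityᵥ_apply hint measurableSet_Ioc, hIoc z₁ z₂ hz]
  refine ⟨fun S hS hS₀ => ?_, fun S hS => by rw [hνF_eq, withDensityᵥ_apply hint hS]⟩
  rw [hνF_eq, withDensityᵥ_apply hint hS, Measure.restrict_eq_zero.2 hS₀, integral_zero_measure]
end
end

section
/- Define finite-horizon metrics by value iteration: F₀(x,z) := r(x,1{x>z}), F_{k+1}(x,z) := r(x,1{x>z}) + β∫ F_k(y,z) κ_z(x,dy), and similarly G_k with c in place of r; set f₀(x,z) := r(x,1) − r(x,0), f_{k+1}(x,z) := r(x,1) − r(x,0) + β(∫ F_k(y,z) κ¹(x,dy) − ∫ F_k(y,z) κ⁰(x,dy)), and g_k analogously with c and G_k; set m_k(x,z) := f_k(x,z)/g_k(x,z), m*_k(x) := m_k(x,x), M_γ := M/(1−γ), and g̲(x,z) := inf_{k≥0} g_k(x,z). Assume g̲(x,z) > 0 for every state x and threshold z (which implies (PCLI1)). Then for every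 x, z and integer k ≥ 0: (a) |m_k(x,z) − m(x,z)| ≤ 2·M_γ·γᵏ·w(x)·(1 + |m(x,z)|)/g̲(x,z); (b) |m*_k(x) − m*(x)| ≤ 2·M_γ·γᵏ·w(x)·(1 + |m*(x)|)/g̲(x,x). -/
open MeasureTheory ProbabilityTheory Filter Topology Set

noncomputable section

namespace Bandit

variable (P : Bandit)

lemma hγ0 : 0 ≤ P.γ := P.hβ0.trans P.hβγ

lemma h1γ : 0 < 1 - P.γ := by linarith [P.hγ1]

/-- `M_γ := M / (1 - γ)`. -/
def Mγ : ℝ := P.M / (1 - P.γ)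

lemma Mγ_pos : 0 < P.Mγ := div_pos P.hM P.h1γ

lemma Mγ_fix : P.M + P.γ * P.Mγ = P.Mγ := by
  have h := P.h1γ
  rw [Mγ]; field_simp; ring

lemma w_nonneg (x : ℝ) : 0 ≤ P.w x := zero_le_one.trans (P.hw_one x)

lemma c_abs (x : ℝ) (a : Bool) : |P.c x a| ≤ P.M * P.w x := by
  have h0 : 0 ≤ P.c x a := by
    cases a with
    | false => exact P.hc0 x
    | true => exact (P.hc0 x).trans (P.hc01 x).le
  rw [abs_of_nonneg h0]; exact P.hc_bd x a

lemma integrable_bd (a : Bool) (x : ℝ) {h : ℝ → ℝ} (hm : Measurable h) (K : ℝ)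
    (hb : ∀ y, |h y| ≤ K * P.w y) : Integrable h (P.κ a x) :=
  ((P.hw_int a x).const_mul K).mono' hm.aestronglyMeasurable
    (ae_of_all _ fun y => by simpa [Real.norm_eq_abs] using hb y)

lemma int_bound (a : Bool) (x : ℝ) {h : ℝ → ℝ} {K : ℝ} (hK : 0 ≤ K)
    (hb : ∀ y, |h y| ≤ K * P.w y) :
    P.β * |∫ y, h y ∂(P.κ a x)| ≤ K * (P.γ * P.w x) := by
  have h1 : |∫ y, h y ∂(P.κ a x)| ≤ ∫ y, K * P.w y ∂(P.κ a x) := by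
    refine le_trans ?_ (integral_mono_of_nonneg (ae_of_all _ fun y => abs_nonneg (h y))
      ((P.hw_int a x).const_mul K) (ae_of_all _ hb))
    simpa [Real.norm_eq_abs] using norm_integral_le_integral_norm (μ := P.κ a x) h
  have h2 : P.β * ∫ y, K * P.w y ∂(P.κ a x) ≤ K * (P.γ * P.w x) := by
    rw [integral_const_mul]
    have hd := P.hw_drift a x
    calc P.β * (K * ∫ y, P.w y ∂(P.κ a x))
        = K * (P.β * ∫ y, P.w y ∂(P.κ a x)) := by ring
      _ ≤ K * (P.γ * P.w x) := mul_le_mul_of_nonneg_left hd hK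
  exact (mul_le_mul_of_nonneg_left h1 P.hβ0).trans h2

lemma fix_bound {rr : ℝ → Bool → ℝ} (hrb : ∀ x a, |rr x a| ≤ P.M * P.w x)
    {u : ℝ → ℝ} {C : ℝ} (hC : ∀ x, |u x| ≤ C * P.w x)
    (heq : ∀ x, ∃ a, u x = rr x a + P.β * ∫ y, u y ∂(P.κ a x)) (x : ℝ) :
    |u x| ≤ P.Mγ * P.w x := by
  set D := max (C - P.Mγ) 0 with hD
  have hD0 : 0 ≤ D := le_max_right _ _
  have key : ∀ n : ℕ, ∀ x, |u x| ≤ (P.Mγ + P.γ ^ n * D) * P.w x := by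
    intro n
    induction n with
    | zero =>
      intro x
      have hCle : C ≤ P.Mγ + 1 * D := by
        have := le_max_left (C - P.Mγ) 0
        simp only [one_mul, ← hD]; linarith
      calc |u x| ≤ C * P.w x := hC x
        _ ≤ (P.Mγ + P.γ ^ 0 * D) * P.w x := by
            simpa using mul_le_mul_of_nonneg_right hCle (P.w_nonneg x)
    | succ n ih =>
      intro x
      obtain ⟨a, ha⟩ := heq x
      have hK : 0 ≤ P.Mγ + P.γ ^ n * D := by
        have := P.Mγ_pos; have := pow_nonneg P.hγ0 n; positivity
      have hb := P.int_bound a x hK (fun y => ih y)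
      calc |u x| ≤ |rr x a| + P.β * |∫ y, u y ∂(P.κ a x)| := by
            rw [ha]
            refine (abs_add_le _ _).trans ?_
            rw [abs_mul, abs_of_nonneg P.hβ0]
        _ ≤ P.M * P.w x + (P.Mγ + P.γ ^ n * D) * (P.γ * P.w x) := add_le_add (hrb x a) hb
        _ = (P.Mγ + P.γ ^ (n + 1) * D) * P.w x := by
            linear_combination P.w x * P.Mγ_fix
  have hlim : Tendsto (fun n : ℕ => (P.Mγ + P.γ ^ n * D) * P.w x) atTop
      (𝓝 (P.Mγ * P.w x)) := by
    have h0 : Tendsto (fun n : ℕ => P.γ ^ n) atTop (𝓝 0) :=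
      tendsto_pow_atTop_nhds_zero_of_lt_one P.hγ0 P.hγ1
    have := (((h0.mul_const D).const_add P.Mγ).mul_const (P.w x))
    simpa using this
  exact ge_of_tendsto' hlim fun n => key n x

lemma F_bd (z : EReal) (x : ℝ) : |P.F x z| ≤ P.Mγ * P.w x := by
  obtain ⟨C, hC⟩ := P.hF_bdd z
  exact P.fix_bound P.hr_bd hC (fun x => ⟨_, P.hF_eq x z⟩) x

lemma G_bd (z : EReal) (x : ℝ) : |P.G x z| ≤ P.Mγ * P.w x := by
  obtain ⟨C, hC⟩ := P.hG_bdd z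
  exact P.fix_bound P.c_abs hC (fun x => ⟨_, P.hG_eq x z⟩) x

lemma meas_int (a : Bool) {h : ℝ → ℝ} (hm : Measurable h) :
    Measurable fun x => ∫ y, h y ∂(P.κ a x) := by
  haveI := P.hκ a
  have : StronglyMeasurable fun p : ℝ × ℝ => h p.2 :=
    (hm.comp measurable_snd).stronglyMeasurable
  exact this.integral_kernel_prod_right'.measurable

lemma iter_props {rr : ℝ → Bool → ℝ} (hrm : ∀ a, Measurable fun x => rr x a)
    (hrb : ∀ x a, |rr x a| ≤ P.M * P.w x)
    {u : ℝ → ℝ} (hum : Measurable u) (hub : ∀ x, |u x| ≤ P.Mγ * P.w x)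
    {act : ℝ → Bool} (hact : MeasurableSet {x | act x = true})
    (heq : ∀ x, u x = rr x (act x) + P.β * ∫ y, u y ∂(P.κ (act x) x))
    {uk : ℕ → ℝ → ℝ} (h0 : ∀ x, uk 0 x = rr x (act x))
    (hstep : ∀ k x, uk (k + 1) x = rr x (act x) + P.β * ∫ y, uk k y ∂(P.κ (act x) x)) :
    ∀ k, Measurable (uk k) ∧ (∀ x, |uk k x| ≤ P.Mγ * P.w x) ∧
      ∀ x, |uk k x - u x| ≤ P.Mγ * P.γ ^ (k + 1) * P.w x := by
  have hγk : ∀ n : ℕ, (0:ℝ) ≤ P.γ ^ n := fun n => pow_nonneg P.hγ0 n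
  intro k
  induction k with
  | zero =>
    refine ⟨?_, ?_, ?_⟩
    · have : uk 0 = fun x => if act x = true then rr x true else rr x false := by
        funext x; rw [h0]; cases hax : act x <;> simp [hax]
      rw [this]
      exact Measurable.ite hact (hrm true) (hrm false)
    · intro x
      rw [h0]
      calc |rr x (act x)| ≤ P.M * P.w x := hrb x _
        _ ≤ P.Mγ * P.w x := by
            refine mul_le_mul_of_nonneg_right ?_ (P.w_nonneg x)
            rw [Mγ, le_div_iff₀ P.h1γ]
            nlinarith [P.hM, P.hγ0]
    · intro x
      have hd : uk 0 x - u x = -(P.β * ∫ y, u y ∂(P.κ (act x) x)) := by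
        rw [h0, heq x]; ring
      rw [hd, abs_neg, abs_mul, abs_of_nonneg P.hβ0]
      calc P.β * |∫ y, u y ∂(P.κ (act x) x)| ≤ P.Mγ * (P.γ * P.w x) :=
            P.int_bound _ x P.Mγ_pos.le hub
        _ = P.Mγ * P.γ ^ (0 + 1) * P.w x := by ring
  | succ k ih =>
    obtain ⟨ihm, ihb, ihe⟩ := ih
    have hint : ∀ a x, Integrable (uk k) (P.κ a x) := fun a x =>
      P.integrable_bd a x ihm P.Mγ ihb
    have hintu : ∀ a x, Integrable u (P.κ a x) := fun a x =>
      P.integrable_bd a x hum P.Mγ hub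
    refine ⟨?_, ?_, ?_⟩
    · have : uk (k + 1) = fun x => if act x = true then
          rr x true + P.β * ∫ y, uk k y ∂(P.κ true x)
        else rr x false + P.β * ∫ y, uk k y ∂(P.κ false x) := by
        funext x; rw [hstep]; cases hax : act x <;> simp [hax]
      rw [this]
      exact Measurable.ite hact
        ((hrm true).add ((P.meas_int true ihm).const_mul P.β))
        ((hrm false).add ((P.meas_int false ihm).const_mul P.β))
    · intro x
      rw [hstep]
      calc |rr x (act x) + P.β * ∫ y, uk k y ∂(P.κ (act x) x)|
          ≤ |rr x (act x)| + P.β * |∫ y, uk k y ∂(P.κ (act x) x)| := by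
            refine (abs_add_le _ _).trans ?_
            rw [abs_mul, abs_of_nonneg P.hβ0]
        _ ≤ P.M * P.w x + P.Mγ * (P.γ * P.w x) :=
            add_le_add (hrb x _) (P.int_bound _ x P.Mγ_pos.le ihb)
        _ = P.Mγ * P.w x := by linear_combination P.w x * P.Mγ_fix
    · intro x
      have hd : uk (k + 1) x - u x
          = P.β * ∫ y, (uk k y - u y) ∂(P.κ (act x) x) := by
        rw [hstep, heq x, integral_sub (hint _ x) (hintu _ x)]; ring
      rw [hd, abs_mul, abs_of_nonneg P.hβ0]
      have hK : 0 ≤ P.Mγ * P.γ ^ (k + 1) := mul_nonneg P.Mγ_pos.le (hγk _)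
      calc P.β * |∫ y, (uk k y - u y) ∂(P.κ (act x) x)|
          ≤ P.Mγ * P.γ ^ (k + 1) * (P.γ * P.w x) :=
            P.int_bound _ x hK (fun y => by simpa [mul_assoc] using ihe y)
        _ = P.Mγ * P.γ ^ (k + 1 + 1) * P.w x := by ring

lemma act_meas (z : EReal) : MeasurableSet {x : ℝ | decide (z < (x : EReal)) = true} := by
  have : {x : ℝ | decide (z < (x : EReal)) = true} = {x : ℝ | z < (x : EReal)} := by
    ext x; simp
  rw [this]
  exact measurable_coe_real_ereal measurableSet_Ioi

lemma Fk_props (z : EReal) (k : ℕ) :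
    Measurable (fun x => P.Fk k x z) ∧ (∀ x, |P.Fk k x z| ≤ P.Mγ * P.w x) ∧
      ∀ x, |P.Fk k x z - P.F x z| ≤ P.Mγ * P.γ ^ (k + 1) * P.w x :=
  P.iter_props (act := fun x => decide (z < (x : EReal))) (uk := fun k x => P.Fk k x z)
    (fun a => (P.hr_cont a).measurable) P.hr_bd (P.hF_meas z) (P.F_bd z)
    (act_meas z) (fun x => P.hF_eq x z) (fun _ => rfl) (fun _ _ => rfl) k

lemma Gk_props (z : EReal) (k : ℕ) :
    Measurable (fun x => P.Gk k x z) ∧ (∀ x, |P.Gk k x z| ≤ P.Mγ * P.w x) ∧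
      ∀ x, |P.Gk k x z - P.G x z| ≤ P.Mγ * P.γ ^ (k + 1) * P.w x :=
  P.iter_props (act := fun x => decide (z < (x : EReal))) (uk := fun k x => P.Gk k x z)
    (fun a => (P.hc_cont a).measurable) P.c_abs (P.hG_meas z) (P.G_bd z)
    (act_meas z) (fun x => P.hG_eq x z) (fun _ => rfl) (fun _ _ => rfl) k

lemma marg_err {u uk : ℝ → ℝ} (hum : Measurable u) {K : ℝ} (hK : 0 ≤ K)
    (hub : ∀ x, |u x| ≤ P.Mγ * P.w x) (hukm : Measurable uk)
    (hukb : ∀ x, |uk x| ≤ P.Mγ * P.w x) (he : ∀ x, |uk x - u x| ≤ K * P.w x) (x : ℝ) :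
    |P.β * ((∫ y, uk y ∂(P.κ true x)) - ∫ y, uk y ∂(P.κ false x))
      - P.β * ((∫ y, u y ∂(P.κ true x)) - ∫ y, u y ∂(P.κ false x))|
      ≤ 2 * K * P.γ * P.w x := by
  have hint : ∀ a, Integrable uk (P.κ a x) := fun a => P.integrable_bd a x hukm P.Mγ hukb
  have hintu : ∀ a, Integrable u (P.κ a x) := fun a => P.integrable_bd a x hum P.Mγ hub
  have key : ∀ a : Bool, P.β * |∫ y, (uk y - u y) ∂(P.κ a x)| ≤ K * (P.γ * P.w x) :=
    fun a => P.int_bound a x hK he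
  have hrw : P.β * ((∫ y, uk y ∂(P.κ true x)) - ∫ y, uk y ∂(P.κ false x))
      - P.β * ((∫ y, u y ∂(P.κ true x)) - ∫ y, u y ∂(P.κ false x))
      = P.β * (∫ y, (uk y - u y) ∂(P.κ true x))
        - P.β * (∫ y, (uk y - u y) ∂(P.κ false x)) := by
    rw [integral_sub (hint true) (hintu true), integral_sub (hint false) (hintu false)]
    ring
  rw [hrw]
  calc |P.β * (∫ y, (uk y - u y) ∂(P.κ true x))
        - P.β * (∫ y, (uk y - u y) ∂(P.κ false x))|
      ≤ P.β * |∫ y, (uk y - u y) ∂(P.κ true x)|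
        + P.β * |∫ y, (uk y - u y) ∂(P.κ false x)| := by
        refine (abs_sub _ _).trans ?_
        rw [abs_mul, abs_mul, abs_of_nonneg P.hβ0]
    _ ≤ K * (P.γ * P.w x) + K * (P.γ * P.w x) := add_le_add (key true) (key false)
    _ = 2 * K * P.γ * P.w x := by ring

lemma fk_err (z : EReal) (k : ℕ) (x : ℝ) :
    |P.fk k x z - P.f x z| ≤ 2 * P.Mγ * P.γ ^ (k + 1) * P.w x := by
  cases k with
  | zero =>
    have hd : P.fk 0 x z - P.f x z
        = -(P.β * ((∫ y, P.F y z ∂(P.κ true x)) - ∫ y, P.F y z ∂(P.κ false x))) := by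
      simp only [Bandit.fk, Bandit.f]; ring
    rw [hd, abs_neg]
    have h1 : ∀ a : Bool, P.β * |∫ y, P.F y z ∂(P.κ a x)| ≤ P.Mγ * (P.γ * P.w x) :=
      fun a => P.int_bound a x P.Mγ_pos.le (P.F_bd z)
    calc |P.β * ((∫ y, P.F y z ∂(P.κ true x)) - ∫ y, P.F y z ∂(P.κ false x))|
        ≤ P.β * |∫ y, P.F y z ∂(P.κ true x)| + P.β * |∫ y, P.F y z ∂(P.κ false x)| := by
          rw [mul_sub]
          refine (abs_sub _ _).trans ?_
          rw [abs_mul, abs_mul, abs_of_nonneg P.hβ0]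
      _ ≤ P.Mγ * (P.γ * P.w x) + P.Mγ * (P.γ * P.w x) := add_le_add (h1 true) (h1 false)
      _ = 2 * P.Mγ * P.γ ^ (0 + 1) * P.w x := by ring
  | succ k =>
    obtain ⟨hm, hb, he⟩ := P.Fk_props z k
    have h := P.marg_err (P.hF_meas z) (mul_nonneg P.Mγ_pos.le (pow_nonneg P.hγ0 _))
      (P.F_bd z) hm hb (fun y => by simpa [mul_assoc] using he y) x
    have hd : P.fk (k + 1) x z - P.f x z
        = P.β * ((∫ y, P.Fk k y z ∂(P.κ true x)) - ∫ y, P.Fk k y z ∂(P.κ false x))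
          - P.β * ((∫ y, P.F y z ∂(P.κ true x)) - ∫ y, P.F y z ∂(P.κ false x)) := by
      simp only [Bandit.fk, Bandit.f]; ring
    rw [hd]
    calc _ ≤ 2 * (P.Mγ * P.γ ^ (k + 1)) * P.γ * P.w x := h
      _ = 2 * P.Mγ * P.γ ^ (k + 1 + 1) * P.w x := by ring

lemma gk_err (z : EReal) (k : ℕ) (x : ℝ) :
    |P.gk k x z - P.g x z| ≤ 2 * P.Mγ * P.γ ^ (k + 1) * P.w x := by
  cases k with
  | zero =>
    have hd : P.gk 0 x z - P.g x z
        = -(P.β * ((∫ y, P.G y z ∂(P.κ true x)) - ∫ y, P.G y z ∂(P.κ false x))) := by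
      simp only [Bandit.gk, Bandit.g]; ring
    rw [hd, abs_neg]
    have h1 : ∀ a : Bool, P.β * |∫ y, P.G y z ∂(P.κ a x)| ≤ P.Mγ * (P.γ * P.w x) :=
      fun a => P.int_bound a x P.Mγ_pos.le (P.G_bd z)
    calc |P.β * ((∫ y, P.G y z ∂(P.κ true x)) - ∫ y, P.G y z ∂(P.κ false x))|
        ≤ P.β * |∫ y, P.G y z ∂(P.κ true x)| + P.β * |∫ y, P.G y z ∂(P.κ false x)| := by
          rw [mul_sub]
          refine (abs_sub _ _).trans ?_
          rw [abs_mul, abs_mul, abs_of_nonneg P.hβ0]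
      _ ≤ P.Mγ * (P.γ * P.w x) + P.Mγ * (P.γ * P.w x) := add_le_add (h1 true) (h1 false)
      _ = 2 * P.Mγ * P.γ ^ (0 + 1) * P.w x := by ring
  | succ k =>
    obtain ⟨hm, hb, he⟩ := P.Gk_props z k
    have h := P.marg_err (P.hG_meas z) (mul_nonneg P.Mγ_pos.le (pow_nonneg P.hγ0 _))
      (P.G_bd z) hm hb (fun y => by simpa [mul_assoc] using he y) x
    have hd : P.gk (k + 1) x z - P.g x z
        = P.β * ((∫ y, P.Gk k y z ∂(P.κ true x)) - ∫ y, P.Gk k y z ∂(P.κ false x))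
          - P.β * ((∫ y, P.G y z ∂(P.κ true x)) - ∫ y, P.G y z ∂(P.κ false x)) := by
      simp only [Bandit.gk, Bandit.g]; ring
    rw [hd]
    calc _ ≤ 2 * (P.Mγ * P.γ ^ (k + 1)) * P.γ * P.w x := h
      _ = 2 * P.Mγ * P.γ ^ (k + 1 + 1) * P.w x := by ring

lemma main_est (hg : ∀ (x : ℝ) (z : EReal), 0 < P.gbar x z) (x : ℝ) (z : EReal) (k : ℕ) :
    |P.mk' k x z - P.m x z| ≤
      2 * (P.M / (1 - P.γ)) * P.γ ^ k * P.w x * (1 + |P.m x z|) / P.gbar x z := by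
  have hγk : (0:ℝ) ≤ P.γ ^ k := pow_nonneg P.hγ0 k
  set E : ℝ := 2 * P.Mγ * P.γ ^ k * P.w x with hE
  have hE0 : 0 ≤ E := by
    have := P.Mγ_pos; have := P.w_nonneg x; positivity
  have hpow : P.γ ^ (k + 1) ≤ P.γ ^ k := by
    rw [pow_succ]
    nlinarith [P.hγ1, P.hγ0, hγk]
  have herr_le : ∀ n : ℕ, 2 * P.Mγ * P.γ ^ (n + 1) * P.w x ≤ 2 * P.Mγ * P.γ ^ n * P.w x := by
    intro n
    have h1 : P.γ ^ (n + 1) ≤ P.γ ^ n := by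
      rw [pow_succ]; nlinarith [P.hγ1, P.hγ0, pow_nonneg P.hγ0 n]
    have h2 : (0:ℝ) ≤ 2 * P.Mγ := by linarith [P.Mγ_pos]
    exact mul_le_mul_of_nonneg_right (mul_le_mul_of_nonneg_left h1 h2) (P.w_nonneg x)
  have hf : |P.fk k x z - P.f x z| ≤ E := (P.fk_err z k x).trans (herr_le k)
  have hgk : |P.gk k x z - P.g x z| ≤ E := (P.gk_err z k x).trans (herr_le k)
  have hbdd : BddBelow (Set.range fun n : ℕ => P.gk n x z) := by
    by_contra hb
    have h0 : P.gbar x z = 0 := Real.iInf_of_not_bddBelow hb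
    exact absurd (hg x z) (by rw [h0]; exact lt_irrefl 0)
  have hle : ∀ n, P.gbar x z ≤ P.gk n x z := fun n => ciInf_le hbdd n
  have hgkpos : 0 < P.gk k x z := (hg x z).trans_le (hle k)
  have hgbarle : P.gbar x z ≤ P.g x z := by
    have hlim : Tendsto (fun n : ℕ => P.g x z + 2 * P.Mγ * P.γ ^ (n + 1) * P.w x) atTop
        (𝓝 (P.g x z)) := by
      have h0 : Tendsto (fun n : ℕ => P.γ ^ n) atTop (𝓝 0) :=
        tendsto_pow_atTop_nhds_zero_of_lt_one P.hγ0 P.hγ1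
      have h1 : Tendsto (fun n : ℕ => P.g x z + 2 * P.Mγ * (P.γ ^ n * P.γ) * P.w x) atTop
          (𝓝 (P.g x z + 2 * P.Mγ * (0 * P.γ) * P.w x)) := by
        exact (((((h0.mul_const P.γ).const_mul (2 * P.Mγ)).mul_const (P.w x)).const_add
          (P.g x z)))
      simpa [pow_succ] using h1
    refine ge_of_tendsto' hlim fun n => ?_
    have h1 := abs_le.mp (P.gk_err z n x)
    have h2 := hle n
    linarith [h1.1, h1.2]
  have hg0 : 0 < P.g x z := (hg x z).trans_le hgbarle
  have hfg : P.f x z = P.m x z * P.g x z := by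
    rw [Bandit.m, div_mul_cancel₀ _ hg0.ne']
  have hnum : |P.fk k x z - P.m x z * P.gk k x z| ≤ E * (1 + |P.m x z|) := by
    have hsplit : P.fk k x z - P.m x z * P.gk k x z
        = (P.fk k x z - P.f x z) - P.m x z * (P.gk k x z - P.g x z) := by
      linear_combination hfg
    rw [hsplit]
    calc |(P.fk k x z - P.f x z) - P.m x z * (P.gk k x z - P.g x z)|
        ≤ |P.fk k x z - P.f x z| + |P.m x z| * |P.gk k x z - P.g x z| := by
          refine (abs_sub _ _).trans ?_
          rw [abs_mul]
      _ ≤ E + |P.m x z| * E :=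
          add_le_add hf (mul_le_mul_of_nonneg_left hgk (abs_nonneg _))
      _ = E * (1 + |P.m x z|) := by ring
  have hratio : P.mk' k x z - P.m x z
      = (P.fk k x z - P.m x z * P.gk k x z) / P.gk k x z := by
    rw [Bandit.mk']
    field_simp
  rw [hratio, abs_div, abs_of_pos hgkpos]
  have hgoal : 2 * (P.M / (1 - P.γ)) * P.γ ^ k * P.w x * (1 + |P.m x z|) / P.gbar x z
      = E * (1 + |P.m x z|) / P.gbar x z := by
    rw [hE, Mγ]
  rw [hgoal]
  exact div_le_div₀ (mul_nonneg hE0 (by positivity)) hnum (hg x z) (hle k)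

end Bandit

/-- Convergence of the finite-horizon MP metric and MP index, with at least
linear rate `γ`, assuming `g̲(x,z) = inf_k g_k(x,z) > 0`. -/
theorem finite_horizon_mp_convergence (P : Bandit)
    (hg : ∀ (x : ℝ) (z : EReal), 0 < P.gbar x z) :
    ∀ (x : ℝ) (z : EReal) (k : ℕ),
      |P.mk' k x z - P.m x z| ≤
        2 * (P.M / (1 - P.γ)) * P.γ ^ k * P.w x * (1 + |P.m x z|) / P.gbar x z ∧
      |P.mkStar k x - P.mStar x| ≤
        2 * (P.M / (1 - P.γ)) * P.γ ^ k * P.w x * (1 + |P.mStar x|) /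
          P.gbar x (x : EReal) := by
  intro x z k
  refine ⟨P.main_est hg x z k, ?_⟩
  simpa [Bandit.mkStar, Bandit.mStar] using P.main_est hg x x k
end
end
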